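/- Under the assumption w = w_L e_L (with w_L ≠ 0) and Γ = γ e_L, the ReLU-loss gradient with respect to w_L is a_L Φ(b/‖w‖) + ρ(c − ρ a_L b/‖w‖)φ(b/‖w‖), and the gradient with respect to any coordinate w_i for i ≠ L is zero, where ρ = sign(w_L), a_L = w_L − γ. -/

import Mathlib

open MeasureTheory ProbabilityTheory Matrix

/-- The standard multivariate Gaussian `N(0, I_L)` on `ℝ^L`. -/
noncomputable def stdGaussian (L : ℕ) : Measure (Fin L → ℝ) :=
  Measure.pi fun _ => gaussianReal 0 1

/-- Euclidean norm of a vector in `ℝ^L`. -/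
noncomputable def l2norm {L : ℕ} (v : Fin L → ℝ) : ℝ :=
  Real.sqrt (∑ i, (v i) ^ 2)

/-- The standard normal pdf `φ`. -/
noncomputable def phiPdf (t : ℝ) : ℝ :=
  Real.exp (-t ^ 2 / 2) / Real.sqrt (2 * Real.pi)

/-- The standard normal CDF `Φ`. -/
noncomputable def Phi (t : ℝ) : ℝ :=
  ∫ s in Set.Iic t, phiPdf s

/-!
Since `w` and `Γ` are multiples of `e_L`, the integrand is `F(x_L) x_i` with
`F(t) = 1_{w_L t + b > 0} ((w_L - γ) t + c)`. For `i ≠ L` the coordinates are independent, so the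
expectation factors as `E[F(x_L)] E[x_i] = 0`. For `i = L` it is the one-dimensional integral
`E[F(t) t]`; substituting `t = ρ u` (the standard Gaussian is symmetric) turns the half-line
`{w_L t + b > 0}` into `{u > -s}` with `s = b / |w_L|`, and the truncated moments
`∫_{u > -s} u φ = φ(s)` and `∫_{u > -s} u² φ = Φ(s) - s φ(s)`, obtained by integrating by parts
with `φ' = -u φ`, give the formula (using `ρ² = 1`).
-/

open Real Set Filter Topology
open scoped NNReal

lemma Real.sign_mul_sign_of_ne_zero {r : ℝ} (hr : r ≠ 0) : sign r * sign r = 1 := by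
  rcases sign_apply_eq_of_ne_zero r hr with h | h <;> simp [h]

lemma Real.mul_sign_eq_abs (r : ℝ) : r * sign r = |r| := by
  rcases lt_trichotomy r 0 with h | rfl | h
  · simp [sign_of_neg h, abs_of_neg h]
  · simp
  · simp [sign_of_pos h, abs_of_pos h]

lemma phiPdf_eq_gaussianPDFReal : phiPdf = gaussianPDFReal 0 1 := by
  ext t
  simp [phiPdf, gaussianPDFReal, div_eq_inv_mul, mul_comm]

lemma phiPdf_eq_mul_exp (t : ℝ) : phiPdf t = (√(2 * π))⁻¹ * exp (-(1 / 2) * t ^ 2) := by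
  rw [phiPdf, div_eq_inv_mul]; ring_nf

lemma phiPdf_neg (t : ℝ) : phiPdf (-t) = phiPdf t := by
  simp [phiPdf]

lemma hasDerivAt_phiPdf (t : ℝ) : HasDerivAt phiPdf (-t * phiPdf t) t := by
  have h := (((hasDerivAt_pow 2 t).const_mul (-(1 / 2))).exp).const_mul (√(2 * π))⁻¹
  rw [show phiPdf = _ from funext phiPdf_eq_mul_exp]
  exact h.congr_deriv (by push_cast; ring)

lemma integrable_pow_mul_phiPdf (n : ℕ) : Integrable fun t => t ^ n * phiPdf t := by
  have h := (integrable_rpow_mul_exp_neg_mul_sq (b := 1 / 2) (by norm_num)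
    (s := n) (by linarith [n.cast_nonneg (α := ℝ)])).const_mul (√(2 * π))⁻¹
  refine h.congr (ae_of_all _ fun t => ?_)
  simp only [rpow_natCast, phiPdf_eq_mul_exp]; ring

lemma integrable_phiPdf : Integrable phiPdf := by
  simpa using integrable_pow_mul_phiPdf 0

lemma integrable_mul_phiPdf : Integrable fun t => t * phiPdf t := by
  simpa using integrable_pow_mul_phiPdf 1

lemma tendsto_pow_mul_phiPdf_atTop (n : ℕ) :
    Tendsto (fun t => t ^ n * phiPdf t) atTop (𝓝 0) := by
  have h := (rpow_mul_exp_neg_mul_sq_isLittleO_exp_neg (b := 1 / 2) (by norm_num) n)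
    |>.tendsto_zero_of_tendsto (tendsto_exp_atBot.comp <|
      tendsto_id.const_mul_atTop_of_neg (by norm_num)) |>.const_mul (√(2 * π))⁻¹
  rw [mul_zero] at h
  refine h.congr fun t => ?_
  simp only [rpow_natCast, phiPdf_eq_mul_exp]; ring

lemma setIntegral_phiPdf_Ioi (a : ℝ) : ∫ t in Ioi a, phiPdf t = Phi (-a) := by
  rw [Phi, ← integral_comp_neg_Ioi]
  simp only [phiPdf_neg]

lemma setIntegral_mul_phiPdf_Ioi (a : ℝ) : ∫ t in Ioi a, t * phiPdf t = phiPdf a := by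
  have h := integral_Ioi_of_hasDerivAt_of_tendsto' (f := fun t => -phiPdf t) (a := a) (m := 0)
    (fun t _ => by simpa using (hasDerivAt_phiPdf t).fun_neg)
    integrable_mul_phiPdf.integrableOn
    (by simpa using (tendsto_pow_mul_phiPdf_atTop 0).neg)
  simpa using h

lemma setIntegral_sq_mul_phiPdf_Ioi (a : ℝ) :
    ∫ t in Ioi a, t ^ 2 * phiPdf t = Phi (-a) + a * phiPdf a := by
  have h := integral_Ioi_of_hasDerivAt_of_tendsto' (f := fun t => -(t * phiPdf t)) (a := a)
    (f' := fun t => t ^ 2 * phiPdf t - phiPdf t) (m := 0)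
    (fun t _ => ((hasDerivAt_id t).mul (hasDerivAt_phiPdf t)).fun_neg.congr_deriv (by simp; ring))
    ((integrable_pow_mul_phiPdf 2).integrableOn.sub integrable_phiPdf.integrableOn)
    (by simpa using (tendsto_pow_mul_phiPdf_atTop 1).neg)
  rw [integral_sub (integrable_pow_mul_phiPdf 2).integrableOn integrable_phiPdf.integrableOn,
    setIntegral_phiPdf_Ioi] at h
  linarith

lemma integral_gaussianReal_eq_integral_mul_phiPdf (f : ℝ → ℝ) :
    ∫ t, f t ∂gaussianReal 0 1 = ∫ t, f t * phiPdf t := by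
  rw [integral_gaussianReal_eq_integral_smul one_ne_zero, phiPdf_eq_gaussianPDFReal]
  simp only [smul_eq_mul, mul_comm (gaussianPDFReal 0 1 _)]

lemma integral_comp_neg_gaussianReal {E : Type*} [NormedAddCommGroup E] [NormedSpace ℝ E]
    (v : ℝ≥0) (f : ℝ → E) : ∫ t, f (-t) ∂gaussianReal 0 v = ∫ t, f t ∂gaussianReal 0 v :=
  calc _ = ∫ t, f t ∂(gaussianReal 0 v).map (fun t => -t) :=
        ((Homeomorph.neg ℝ).measurableEmbedding.integral_map f).symm
    _ = _ := by rw [gaussianReal_map_neg, neg_zero]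

lemma integral_comp_mul_gaussianReal {E : Type*} [NormedAddCommGroup E] [NormedSpace ℝ E]
    (v : ℝ≥0) {ε : ℝ} (hε : ε = -1 ∨ ε = 1) (f : ℝ → E) :
    ∫ t, f (ε * t) ∂gaussianReal 0 v = ∫ t, f t ∂gaussianReal 0 v := by
  rcases hε with rfl | rfl
  · simpa using integral_comp_neg_gaussianReal v f
  · simp

lemma integral_indicator_affine_mul_id_gaussianReal (a c w b : ℝ) (hw : w ≠ 0) :
    ∫ t, {t | 0 < w * t + b}.indicator (fun t => a * t + c) t * t ∂gaussianReal 0 1 =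
      a * Phi (b / |w|) + sign w * (c - sign w * a * (b / |w|)) * phiPdf (b / |w|) := by
  set ρ := sign w
  set s := b / |w| with hs
  have hρρ : ρ * ρ = 1 := sign_mul_sign_of_ne_zero hw
  have hregion (u : ℝ) : 0 < w * (ρ * u) + b ↔ u ∈ Ioi (-s) := by
    rw [← mul_assoc, mul_sign_eq_abs, mem_Ioi, hs, ← neg_div, div_lt_iff₀ (abs_pos.2 hw)]
    constructor <;> intro h <;> linarith
  calc _ = ∫ u, {t | 0 < w * t + b}.indicator (fun t => a * t + c) (ρ * u) * (ρ * u)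
          ∂gaussianReal 0 1 :=
        (integral_comp_mul_gaussianReal 1 (sign_apply_eq_of_ne_zero w hw) _).symm
    _ = ∫ u in Ioi (-s), a * (u ^ 2 * phiPdf u) + ρ * c * (u * phiPdf u) := by
        rw [integral_gaussianReal_eq_integral_mul_phiPdf, ← integral_indicator measurableSet_Ioi]
        congr 1 with u
        simp only [indicator_apply, mem_ofPred_eq, hregion]
        split_ifs
        · linear_combination (a * u ^ 2 * phiPdf u) * hρρ
        · simp
    _ = a * Phi s + ρ * (c - ρ * a * s) * phiPdf s := by
        rw [integral_add ((integrable_pow_mul_phiPdf 2).integrableOn.const_mul a)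
          (integrable_mul_phiPdf.integrableOn.const_mul _), integral_const_mul, integral_const_mul,
          setIntegral_sq_mul_phiPdf_Ioi, setIntegral_mul_phiPdf_Ioi, neg_neg, phiPdf_neg]
        linear_combination (a * s * phiPdf s) * hρρ

lemma integral_comp_eval_mul_comp_eval {ι α 𝕜 : Type*} [Fintype ι] [MeasurableSpace α]
    [RCLike 𝕜] (μ : ι → Measure α) [∀ k, IsProbabilityMeasure (μ k)] (f g : α → 𝕜) {i j : ι}
    (hij : i ≠ j) :
    ∫ x, f (x i) * g (x j) ∂Measure.pi μ = (∫ t, f t ∂μ i) * ∫ t, g t ∂μ j := by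
  classical
  let G (k : ι) : α → 𝕜 := if k = i then f else if k = j then g else 1
  have hprod {h : ι → 𝕜} (h1 : ∀ k, k ≠ i → k ≠ j → h k = 1) : ∏ k, h k = h i * h j :=
    Finset.prod_eq_mul i j hij (fun k _ hk => h1 k hk.1 hk.2) (by simp) (by simp)
  calc _ = ∫ x, ∏ k, G k (x k) ∂Measure.pi μ := by
        congr 1 with x
        rw [hprod fun k hi hj => by simp [G, hi, hj]]
        simp [G, hij.symm]
    _ = ∏ k, ∫ t, G k t ∂μ k := integral_fintype_prod_eq_prod G
    _ = _ := by
        rw [hprod fun k hi hj => by simp [G, hi, hj]]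
        simp [G, hij.symm]

lemma l2norm_single {L : ℕ} (i : Fin L) (a : ℝ) : l2norm (Pi.single i a) = |a| := by
  simp [l2norm, Pi.single_apply, sqrt_sq_eq_abs]

/-- Under `w = w_L e_L` (with `w_L ≠ 0`) and `Γ = γ e_L`, with the ReLU-loss
gradient `∂L/∂w = E[1_{wᵀx+b>0}(aᵀx+c)x]` where `a = w − Γ`, `c = b − Δ`:
the gradient w.r.t. `w_L` equals `a_L Φ(b/‖w‖) + ρ(c − ρ a_L b/‖w‖) φ(b/‖w‖)`
with `ρ = sign(w_L)` and `a_L = w_L − γ`, and the gradient w.r.t. any other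
coordinate `w_i`, `i ≠ L`, is zero. -/
theorem relu_gradient_aligned (L : ℕ) (wL γ Δ b : ℝ) (hwL : wL ≠ 0)
    (w Γ : Fin (L + 1) → ℝ)
    (hw : w = Pi.single (Fin.last L) wL) (hΓ : Γ = Pi.single (Fin.last L) γ)
    (grad : Fin (L + 1) → ℝ)
    (hgrad : ∀ i, grad i = ∫ x, Set.indicator {x | w ⬝ᵥ x + b > 0}
      (fun x => ((w - Γ) ⬝ᵥ x + (b - Δ)) * x i) x ∂ stdGaussian (L + 1)) :
    grad (Fin.last L) =
      (wL - γ) * Phi (b / l2norm w) +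
        Real.sign wL * ((b - Δ) - Real.sign wL * (wL - γ) * (b / l2norm w)) *
          phiPdf (b / l2norm w) ∧
    ∀ i, i ≠ Fin.last L → grad i = 0 := by
  subst hw hΓ
  set F := {t : ℝ | 0 < wL * t + b}.indicator (fun t => (wL - γ) * t + (b - Δ))
  have hgrad' (i : Fin (L + 1)) :
      grad i = ∫ x, F (x (Fin.last L)) * x i ∂stdGaussian (L + 1) := by
    rw [hgrad]
    congr 1 with x
    simp only [F, indicator_apply, mem_ofPred_eq, ← Pi.single_sub, single_dotProduct, gt_iff_lt]
    split_ifs <;> simp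
  refine ⟨?_, fun i hi => ?_⟩
  · have hF : Measurable F := (by fun_prop : Measurable fun t => (wL - γ) * t + (b - Δ)).indicator
      (measurableSet_lt measurable_const (by fun_prop))
    rw [hgrad', l2norm_single, ← integral_indicator_affine_mul_id_gaussianReal _ _ _ _ hwL]
    exact integral_comp_eval (μ := fun _ => gaussianReal 0 1) (f := fun t => F t * t)
      (hF.fun_mul measurable_id).aestronglyMeasurable
  · rw [hgrad', _root_.stdGaussian,
      integral_comp_eval_mul_comp_eval _ F (fun t => t) hi.symm, integral_id_gaussianReal, mul_zero]
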